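/- arXiv:math/0412230 — 2 statements merged into one kernel-verified Lean document; each statement's English description precedes it below -/
import Mathlib

section
/- If p : G̃ → G is a nonempty connected covering projection of groupoids, then p is an epimorphism: for any two functors s, t : G → K with s ∘ p = t ∘ p, one has s = t. -/
open CategoryTheory

/-- The costar `t(x)`: the set of all arrows with codomain `x`. -/
def Costar {G : Type*} [Groupoid G] (x : G) := Σ y : G, y ⟶ x

/-- The map `t(x) → t(p x)` induced by a functor `p`. -/
def costarMap {H G : Type*} [Groupoid H] [Groupoid G] (p : H ⥤ G) (x : H) :
    Costar x → Costar (p.obj x) := fun f => ⟨p.obj f.1, p.map f.2⟩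

/-- `p` is a covering projection of groupoids. -/
def IsCoveringProjection {H G : Type*} [Groupoid H] [Groupoid G] (p : H ⥤ G) : Prop :=
  ∀ x : H, Function.Bijective (costarMap p x)

/-- A groupoid is connected if any two objects are joined by an arrow. -/
def IsConnectedGroupoid (G : Type*) [Groupoid G] : Prop := ∀ x y : G, Nonempty (x ⟶ y)

/-- The induced homomorphism on vertex (fundamental) groups. -/
def vertexHom {H G : Type*} [Groupoid H] [Groupoid G] (p : H ⥤ G) (x : H) :
    (x ⟶ x) →* (p.obj x ⟶ p.obj x) where
  toFun := p.map
  map_one' := p.map_id x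
  map_mul' f g := p.map_comp f g

theorem connected_covering_is_epi {Gt G K : Type*} [Groupoid Gt] [Groupoid G] [Groupoid K]
    (p : Gt ⥤ G) (hp : IsCoveringProjection p)
    (hGt : IsConnectedGroupoid Gt) (hG : IsConnectedGroupoid G)
    (hne : Nonempty Gt)
    (s t : G ⥤ K) (h : p ⋙ s = p ⋙ t) : s = t := by
  obtain ⟨x0⟩ := hne
  have hsurj : ∀ a : G, ∃ w : Gt, p.obj w = a := by
    intro a
    obtain ⟨f⟩ := hG a (p.obj x0)
    obtain ⟨⟨w, g⟩, hw⟩ := (hp x0).2 ⟨a, f⟩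
    exact ⟨w, congrArg Sigma.fst hw⟩
  have hobj : ∀ a : G, s.obj a = t.obj a := by
    intro a
    obtain ⟨w, rfl⟩ := hsurj a
    exact Functor.congr_obj h w
  refine CategoryTheory.Functor.ext hobj ?_
  intro a b f
  obtain ⟨z, rfl⟩ := hsurj b
  obtain ⟨⟨w, g⟩, hw⟩ := (hp z).2 ⟨a, f⟩
  obtain ⟨hw1, hw2⟩ := Sigma.mk.inj_iff.mp hw
  subst hw1
  have hg : p.map g = f := eq_of_heq hw2
  subst hg
  have := Functor.congr_hom h g
  simpa using this
end

section
/- Let a group Γ act freely on a connected groupoid G (no non-identity element fixes an object). Then the orbit morphism p : G → G/Γ to the orbit groupoid is a regular covering projection. -/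
open CategoryTheory

/-- A covering projection is regular if every image vertex subgroup is normal. -/
def IsRegularCovering {Gt G : Type*} [Groupoid Gt] [Groupoid G] (p : Gt ⥤ G) : Prop :=
  ∀ x : Gt, ((vertexHom p x).range).Normal

/-- A covering transformation: an automorphism of the total groupoid over the base. -/
def IsCoveringTransformation {Gt G : Type*} [Groupoid Gt] [Groupoid G] (p : Gt ⥤ G)
    (h : Gt ⥤ Gt) : Prop :=
  (∃ k : Gt ⥤ Gt, h ⋙ k = 𝟭 Gt ∧ k ⋙ h = 𝟭 Gt) ∧ h ⋙ p = p

/-- The group `Cov(G̃/G)` of covering transformations, as a subgroup of the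
automorphism group of `G̃` in `Cat`. -/
def covGroup {Gt G : Type*} [Groupoid Gt] [Groupoid G] (p : Gt ⥤ G) :
    Subgroup (Aut (Cat.of Gt)) where
  carrier := {h | h.hom.toFunctor ⋙ p = p}
  one_mem' := rfl
  mul_mem' := by
    intro a b ha hb
    show (b.hom.toFunctor ⋙ a.hom.toFunctor) ⋙ p = p
    refine (Functor.assoc _ _ _).trans ?_
    show b.hom.toFunctor ⋙ (a.hom.toFunctor ⋙ p) = p
    rw [ha, hb]
  inv_mem' := by
    intro a ha
    show a.inv.toFunctor ⋙ p = p
    conv_lhs => rw [← ha]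
    show a.inv.toFunctor ⋙ a.hom.toFunctor ⋙ p = p
    refine (Functor.assoc _ _ _).symm.trans ?_
    have : (a.inv.toFunctor ⋙ a.hom.toFunctor) = 𝟭 _ := congrArg Cat.Hom.toFunctor a.inv_hom_id
    rw [this]
    rfl

/-- A universal covering: a connected covering projection whose total groupoid
has trivial vertex groups. -/
def IsUniversalCovering {Gt G : Type*} [Groupoid Gt] [Groupoid G] (p : Gt ⥤ G) : Prop :=
  IsCoveringProjection p ∧ IsConnectedGroupoid Gt ∧ IsConnectedGroupoid G ∧
    ∀ (x : Gt) (f : x ⟶ x), f = 𝟙 x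

/-- A group action (by functors) on a groupoid is free if no non-identity element
fixes an object. -/
def FreeGroupoidAction {Γ : Type*} [Group Γ] {G : Type} [Groupoid.{0} G]
    (φ : Γ →* Aut (Cat.of G)) : Prop :=
  ∀ γ : Γ, γ ≠ 1 → ∀ x : G, (φ γ).hom.toFunctor.obj x ≠ x

/-- `(Q, q)` is an orbit groupoid of the action `φ` of `Γ` on `G`: the orbit
morphism `q` coequalizes the action and is universal with this property. -/
def IsOrbitGroupoid {Γ : Type*} [Group Γ] {G : Type} [Groupoid.{0} G]
    (φ : Γ →* Aut (Cat.of G)) {Q : Type} [Groupoid.{0} Q] (q : G ⥤ Q) : Prop :=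
  (∀ γ : Γ, (φ γ).hom.toFunctor ⋙ q = q) ∧
  ∀ (H : Type) (_ : Groupoid.{0} H) (f : G ⥤ H), (∀ γ : Γ, (φ γ).hom.toFunctor ⋙ f = f) →
    ∃! f' : Q ⥤ H, q ⋙ f' = f

/-!
An orbit groupoid is unique up to isomorphism under `G`, and composing with an isomorphism
preserves covering projections and regular coverings, so it suffices to treat an explicit model.
Choose a representative `rep c` in every orbit `c`; an arrow `c ⟶ d` of the model is a pair
`(δ, f)` with `f : rep c ⟶ δ • rep d`. Freeness makes the element `toRep x` moving `x` to the
representative of its orbit unique, which gives the universal property and the unique lifting of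
arrows ending at `x`. On the vertex group at the orbit of `x`, `(δ, f) ↦ δ` is a homomorphism whose
kernel is exactly the image of the vertex group at `x`, hence that image is normal.
-/

section Transport

variable {H K L : Type*} [Groupoid H] [Groupoid K] [Groupoid L]

lemma Costar.ext {x : K} {a b : Costar x} (h : a.1 = b.1) (h' : a.2 = eqToHom h ≫ b.2) :
    a = b := by
  obtain ⟨y, f⟩ := a
  obtain ⟨y', f'⟩ := b
  dsimp only at h h'
  subst h
  rw [h', eqToHom_refl, Category.id_comp]

lemma costarMap_comp (p : H ⥤ K) (u : K ⥤ L) (x : H) :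
    costarMap (p ⋙ u) x = costarMap u (p.obj x) ∘ costarMap p x := rfl

lemma vertexHom_comp (p : H ⥤ K) (u : K ⥤ L) (x : H) :
    vertexHom (p ⋙ u) x = (vertexHom u (p.obj x)).comp (vertexHom p x) := rfl

variable {u : K ⥤ L} {v : L ⥤ K}

lemma bijective_costarMap_of_eq_id {w : K ⥤ K} (h : w = 𝟭 K) (x : K) :
    Function.Bijective (costarMap w x) := by
  subst h
  exact Function.bijective_id

lemma bijective_costarMap_of_inverse (huv : u ⋙ v = 𝟭 K) (hvu : v ⋙ u = 𝟭 L) (x : K) :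
    Function.Bijective (costarMap u x) := by
  have hinj := (bijective_costarMap_of_eq_id huv x).injective
  rw [costarMap_comp] at hinj
  refine ⟨hinj.of_comp, ?_⟩
  have hsurj : ∀ y : L, Function.Surjective (costarMap u (v.obj y)) := fun y => by
    have := (bijective_costarMap_of_eq_id hvu y).surjective
    rw [costarMap_comp] at this
    exact this.of_comp
  have hx : v.obj (u.obj x) = x := Functor.congr_obj huv x
  have := hsurj (u.obj x)
  rwa [hx] at this

lemma surjective_vertexHom_of_inverse (huv : u ⋙ v = 𝟭 K) (hvu : v ⋙ u = 𝟭 L) (x : K) :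
    Function.Surjective (vertexHom u x) :=
  have : u.Full := (CategoryTheory.Equivalence.mk u v (eqToIso huv.symm) (eqToIso hvu)).full_functor
  u.map_surjective

theorem IsCoveringProjection.comp_of_inverse {p : H ⥤ K} (hp : IsCoveringProjection p)
    (huv : u ⋙ v = 𝟭 K) (hvu : v ⋙ u = 𝟭 L) : IsCoveringProjection (p ⋙ u) := fun x =>
  (bijective_costarMap_of_inverse huv hvu (p.obj x)).comp (hp x)

theorem IsRegularCovering.comp_of_inverse {p : H ⥤ K} (hp : IsRegularCovering p)
    (huv : u ⋙ v = 𝟭 K) (hvu : v ⋙ u = 𝟭 L) : IsRegularCovering (p ⋙ u) := fun x => by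
  rw [vertexHom_comp, MonoidHom.range_comp]
  exact (hp x).map _ (surjective_vertexHom_of_inverse huv hvu (p.obj x))

end Transport

namespace IsOrbitGroupoid

variable {Γ : Type*} [Group Γ] {G : Type} [Groupoid.{0} G] {φ : Γ →* Aut (Cat.of G)}
  {Q Q' : Type} [Groupoid.{0} Q] [Groupoid.{0} Q'] {q : G ⥤ Q} {q' : G ⥤ Q'}

lemma hom_ext (hq : IsOrbitGroupoid φ q) {H : Type} [Groupoid.{0} H] {f g : Q ⥤ H}
    (h : q ⋙ f = q ⋙ g) : f = g := by
  have hinv : ∀ γ, (φ γ).hom.toFunctor ⋙ q ⋙ f = q ⋙ f := fun γ =>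
    congrArg (· ⋙ f) (hq.1 γ)
  exact (hq.2 H inferInstance (q ⋙ f) hinv).unique rfl h.symm

theorem exists_inverse (hq : IsOrbitGroupoid φ q) (hq' : IsOrbitGroupoid φ q') :
    ∃ (u : Q ⥤ Q') (v : Q' ⥤ Q), q ⋙ u = q' ∧ u ⋙ v = 𝟭 Q ∧ v ⋙ u = 𝟭 Q' := by
  obtain ⟨u, hu, -⟩ := hq.2 Q' inferInstance q' hq'.1
  obtain ⟨v, hv, -⟩ := hq'.2 Q inferInstance q hq.1
  refine ⟨u, v, hu, hq.hom_ext ?_, hq'.hom_ext ?_⟩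
  · rw [← Functor.assoc, hu, hv]; rfl
  · rw [← Functor.assoc, hv, hu]; rfl

end IsOrbitGroupoid

namespace GroupoidOrbit

variable {Γ : Type*} [Group Γ] {G : Type} [Groupoid.{0} G] (φ : Γ →* Aut (Cat.of G))

def act (δ : φ.range) : G ⥤ G := (δ : Aut (Cat.of G)).hom.toFunctor

instance (δ : φ.range) : (act φ δ).IsEquivalence :=
  (Cat.equivOfIso (δ : Aut (Cat.of G))).isEquivalence_functor

lemma act_one : act φ 1 = 𝟭 G := rfl

lemma act_mul (a b : φ.range) : act φ (a * b) = act φ b ⋙ act φ a := rfl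

lemma act_obj_one (x : G) : (act φ 1).obj x = x := rfl

lemma act_obj_mul (a b : φ.range) (x : G) :
    (act φ (a * b)).obj x = (act φ a).obj ((act φ b).obj x) := rfl

lemma act_inv_obj_act_obj (a : φ.range) (x : G) : (act φ a⁻¹).obj ((act φ a).obj x) = x := by
  rw [← act_obj_mul, inv_mul_cancel, act_obj_one]

lemma act_map_one {x y : G} (f : x ⟶ y) :
    (act φ 1).map f = eqToHom (act_obj_one φ x) ≫ f ≫ eqToHom (act_obj_one φ y).symm := by
  simpa using Functor.congr_hom (act_one φ) f

lemma act_map_mul (a b : φ.range) {x y : G} (f : x ⟶ y) :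
    (act φ a).map ((act φ b).map f) =
      eqToHom (act_obj_mul φ a b x).symm ≫ (act φ (a * b)).map f ≫
        eqToHom (act_obj_mul φ a b y) := by
  rw [Functor.congr_hom (act_mul φ a b) f]
  simp

lemma act_map_congr {a b : φ.range} (h : a = b) {x y : G} (f : x ⟶ y) :
    (act φ a).map f = eqToHom (by rw [h]) ≫ (act φ b).map f ≫ eqToHom (by rw [h]) := by
  subst h
  simp

variable {φ} in
theorem _root_.FreeGroupoidAction.eq_one_of_act_obj_eq (hfree : FreeGroupoidAction φ)
    {a : φ.range} {x : G} (h : (act φ a).obj x = x) : a = 1 := by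
  obtain ⟨a, γ, rfl⟩ := a
  by_contra hne
  have hγ : γ ≠ 1 := by
    rintro rfl
    exact hne (Subtype.ext (map_one φ))
  exact hfree γ hγ x h

variable {φ} in
theorem _root_.FreeGroupoidAction.eq_of_act_obj_eq (hfree : FreeGroupoidAction φ)
    {a b : φ.range} {x : G} (h : (act φ a).obj x = (act φ b).obj x) : a = b := by
  have hfix : (act φ (b⁻¹ * a)).obj x = x := by
    rw [act_obj_mul, h, act_inv_obj_act_obj]
  rw [← mul_inv_cancel_left b a, hfree.eq_one_of_act_obj_eq hfix, mul_one]

def orbitSetoid : Setoid G where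
  r x y := ∃ δ : φ.range, (act φ δ).obj x = y
  iseqv := by
    refine ⟨fun x => ⟨1, rfl⟩, ?_, ?_⟩
    · rintro x y ⟨δ, rfl⟩
      exact ⟨δ⁻¹, act_inv_obj_act_obj φ δ x⟩
    · rintro x y z ⟨δ, rfl⟩ ⟨ε, rfl⟩
      exact ⟨ε * δ, rfl⟩

def Orbit : Type := Quotient (orbitSetoid φ)

def toOrbit (x : G) : Orbit φ := Quotient.mk _ x

noncomputable def rep (c : Orbit φ) : G := Quotient.out c

lemma toOrbit_rep (c : Orbit φ) : toOrbit φ (rep φ c) = c := Quotient.out_eq c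

lemma toOrbit_act_obj (δ : φ.range) (x : G) : toOrbit φ ((act φ δ).obj x) = toOrbit φ x :=
  Quotient.sound ⟨δ⁻¹, act_inv_obj_act_obj φ δ x⟩

lemma exists_act_obj_eq_rep (x : G) : ∃ δ : φ.range, (act φ δ).obj x = rep φ (toOrbit φ x) :=
  (orbitSetoid φ).symm (Quotient.mk_out x)

noncomputable def toRep (x : G) : φ.range := (exists_act_obj_eq_rep φ x).choose

lemma act_toRep_obj (x : G) : (act φ (toRep φ x)).obj x = rep φ (toOrbit φ x) :=
  (exists_act_obj_eq_rep φ x).choose_spec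

variable {φ} in
lemma toRep_act_obj (hfree : FreeGroupoidAction φ) (δ : φ.range) (x : G) :
    toRep φ ((act φ δ).obj x) = toRep φ x * δ⁻¹ := by
  refine hfree.eq_of_act_obj_eq (x := (act φ δ).obj x) ?_
  rw [act_toRep_obj, toOrbit_act_obj, act_obj_mul, act_inv_obj_act_obj, act_toRep_obj]

variable {φ} in
lemma toRep_rep (hfree : FreeGroupoidAction φ) (c : Orbit φ) : toRep φ (rep φ c) = 1 :=
  hfree.eq_one_of_act_obj_eq (by rw [act_toRep_obj, toOrbit_rep])

/-- An arrow `c ⟶ d` stands for the orbit of an arrow of `G`, through its member with source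
`rep c`, whose target is the translate of `rep d` by `δ`. -/
abbrev Hom (c d : Orbit φ) : Type := Σ δ : φ.range, rep φ c ⟶ (act φ δ).obj (rep φ d)

variable {φ} in
lemma Hom.ext {c d : Orbit φ} {f g : Hom φ c d} (h : f.1 = g.1)
    (h' : f.2 ≫ eqToHom (by rw [h]) = g.2) : f = g := by
  obtain ⟨a, f⟩ := f
  obtain ⟨b, g⟩ := g
  dsimp only at h h'
  subst h
  rw [← h', eqToHom_refl, Category.comp_id]

noncomputable instance : CategoryStruct (Orbit φ) where
  Hom := Hom φ
  id c := ⟨1, eqToHom (act_obj_one φ (rep φ c)).symm⟩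
  comp {_ _ c} f g :=
    ⟨f.1 * g.1, f.2 ≫ (act φ f.1).map g.2 ≫ eqToHom (act_obj_mul φ f.1 g.1 (rep φ c)).symm⟩

variable {φ}

@[simp] lemma id_fst (c : Orbit φ) : (𝟙 c : c ⟶ c).1 = 1 := rfl

@[simp] lemma id_snd (c : Orbit φ) : (𝟙 c : c ⟶ c).2 = eqToHom (act_obj_one φ (rep φ c)).symm := rfl

@[simp] lemma comp_fst {a b c : Orbit φ} (f : a ⟶ b) (g : b ⟶ c) : (f ≫ g).1 = f.1 * g.1 := rfl

@[simp] lemma comp_snd {a b c : Orbit φ} (f : a ⟶ b) (g : b ⟶ c) :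
    (f ≫ g).2 = f.2 ≫ (act φ f.1).map g.2 ≫ eqToHom (act_obj_mul φ f.1 g.1 (rep φ c)).symm :=
  rfl

lemma id_comp' {a b : Orbit φ} (f : a ⟶ b) : 𝟙 a ≫ f = f :=
  Hom.ext (one_mul _) (by simp [act_map_one])

lemma comp_id' {a b : Orbit φ} (f : a ⟶ b) : f ≫ 𝟙 b = f :=
  Hom.ext (mul_one _) (by simp [eqToHom_map])

lemma assoc' {a b c d : Orbit φ} (f : a ⟶ b) (g : b ⟶ c) (h : c ⟶ d) :
    (f ≫ g) ≫ h = f ≫ g ≫ h :=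
  Hom.ext (mul_assoc _ _ _) (by simp [act_map_mul, eqToHom_map])

noncomputable def inv' {a b : Orbit φ} (f : a ⟶ b) : b ⟶ a :=
  ⟨f.1⁻¹, eqToHom (act_inv_obj_act_obj φ f.1 _).symm ≫ (act φ f.1⁻¹).map (Groupoid.inv f.2)⟩

lemma inv_comp' {a b : Orbit φ} (f : a ⟶ b) : inv' f ≫ f = 𝟙 b := by
  refine Hom.ext (inv_mul_cancel _) ?_
  simp only [comp_snd, id_snd, inv', Category.assoc]
  rw [← Functor.map_comp_assoc, Groupoid.inv_comp]
  simpa using eqToHom_trans _ _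

lemma comp_inv' {a b : Orbit φ} (f : a ⟶ b) : f ≫ inv' f = 𝟙 a := by
  refine Hom.ext (mul_inv_cancel _) ?_
  simp only [comp_snd, id_snd, inv', Functor.map_comp, act_map_mul,
    act_map_congr φ (mul_inv_cancel f.1), act_map_one]
  simpa [eqToHom_map] using eqToHom_trans _ _

noncomputable instance : Groupoid (Orbit φ) where
  id_comp := id_comp'
  comp_id := comp_id'
  assoc := assoc'
  inv := inv'
  inv_comp := inv_comp'
  comp_inv := comp_inv'

variable (φ) in
lemma act_toRep_obj_eq (x y : G) : (act φ (toRep φ x)).obj y =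
    (act φ (toRep φ x * (toRep φ y)⁻¹)).obj (rep φ (toOrbit φ y)) := by
  rw [← act_toRep_obj φ y, ← act_obj_mul, inv_mul_cancel_right]

variable (φ) in
noncomputable abbrev proj : G ⥤ Orbit φ where
  obj := toOrbit φ
  map {x y} f := ⟨toRep φ x * (toRep φ y)⁻¹,
    eqToHom (act_toRep_obj φ x).symm ≫ (act φ (toRep φ x)).map f ≫
      eqToHom (act_toRep_obj_eq φ x y)⟩
  map_id x := Hom.ext (mul_inv_cancel _) (by simp)
  map_comp {x y z} f g := by
    refine Hom.ext (by simp only [comp_fst]; group) ?_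
    simp only [comp_snd, Functor.map_comp, eqToHom_map, Category.assoc, act_map_mul,
      act_map_congr φ (inv_mul_cancel_right (toRep φ x) (toRep φ y)) g]
    simp

@[simp] lemma proj_obj (x : G) : (proj φ).obj x = toOrbit φ x := rfl

@[simp] lemma eqToHom_fst {c d : Orbit φ} (h : c = d) : (eqToHom h : c ⟶ d).1 = 1 := by
  subst h
  rfl

lemma eqToHom_snd {c d : Orbit φ} (h : c = d) : (eqToHom h : c ⟶ d).2 =
    eqToHom (show rep φ c = (act φ (eqToHom h : c ⟶ d).1).obj (rep φ d) by
      subst h; exact (act_obj_one φ _).symm) := by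
  subst h
  rfl

lemma act_eqToHom_fst_map {c d : Orbit φ} (h : c = d) {x y : G} (f : x ⟶ y) :
    (act φ (eqToHom h : c ⟶ d).1).map f =
      eqToHom (by rw [eqToHom_fst, act_obj_one]) ≫ f ≫
      eqToHom (by rw [eqToHom_fst, act_obj_one]) := by
  rw [act_map_congr φ (eqToHom_fst h), act_map_one]
  simp

lemma act_comp_proj (hfree : FreeGroupoidAction φ) (δ : φ.range) :
    act φ δ ⋙ proj φ = proj φ := by
  refine CategoryTheory.Functor.ext (fun x => toOrbit_act_obj φ δ x) fun x y f => Hom.ext ?_ ?_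
  · simp only [Functor.comp_map, comp_fst, eqToHom_fst, toRep_act_obj hfree]
    group
  · simp only [comp_snd, comp_fst, Functor.comp_map, eqToHom_map, Functor.map_comp,
      Category.assoc]
    rw [act_map_congr φ (toRep_act_obj hfree δ x) ((act φ δ).map f), act_map_mul,
      act_map_congr φ (inv_mul_cancel_right (toRep φ x) δ) f]
    simp [eqToHom_snd, act_eqToHom_fst_map, eqToHom_map]

lemma eq_eqToHom_comp_proj_map_comp_eqToHom (hfree : FreeGroupoidAction φ) {c d : Orbit φ}
    (u : c ⟶ d) : u = eqToHom (toOrbit_rep φ c).symm ≫ (proj φ).map u.2 ≫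
      eqToHom (by rw [proj_obj, toOrbit_act_obj, toOrbit_rep]) := by
  refine (Hom.ext ?_ ?_).symm
  · simp only [comp_fst, eqToHom_fst, one_mul]
    rw [toRep_rep hfree, toRep_act_obj hfree, toRep_rep hfree]
    group
  · simp only [comp_snd, comp_fst, eqToHom_snd, eqToHom_map, Category.assoc, act_eqToHom_fst_map]
    rw [act_map_congr φ (toRep_rep hfree c) u.2, act_map_one]
    simp

section Lift

variable {H : Type} [Groupoid.{0} H] (f : G ⥤ H) (hf : ∀ δ : φ.range, act φ δ ⋙ f = f)

noncomputable def lift : Orbit φ ⥤ H where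
  obj c := f.obj (rep φ c)
  map {c d} u := f.map u.2 ≫ eqToHom (Functor.congr_obj (hf u.1) (rep φ d))
  map_id c := by simp [eqToHom_map]
  map_comp {c d e} u v := by
    simp only [comp_snd, Functor.map_comp, eqToHom_map, Category.assoc]
    rw [← Functor.comp_map, Functor.congr_hom (hf u.1) v.2]
    simp

lemma proj_comp_lift : proj φ ⋙ lift f hf = f := by
  refine CategoryTheory.Functor.ext (fun x => ?_) fun x y g => ?_
  · show f.obj (rep φ (toOrbit φ x)) = f.obj x
    rw [← act_toRep_obj φ x]
    exact Functor.congr_obj (hf (toRep φ x)) x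
  · simp only [lift, Functor.comp_map, Functor.map_comp, eqToHom_map, Category.assoc]
    rw [← Functor.comp_map, Functor.congr_hom (hf (toRep φ x)) g]
    simp

lemma eq_lift (hfree : FreeGroupoidAction φ) (g : Orbit φ ⥤ H) (hg : proj φ ⋙ g = f) :
    g = lift f hf := by
  refine CategoryTheory.Functor.ext (fun c => ?_) fun c d u => ?_
  · show g.obj c = f.obj (rep φ c)
    rw [← Functor.congr_obj hg (rep φ c)]
    exact congrArg g.obj (toOrbit_rep φ c).symm
  · conv_lhs => rw [eq_eqToHom_comp_proj_map_comp_eqToHom hfree u]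
    rw [Functor.map_comp, Functor.map_comp, ← Functor.comp_map (proj φ) g,
      Functor.congr_hom hg u.2]
    simp [lift, eqToHom_map]
    erw [eqToHom_trans]

end Lift

theorem isOrbitGroupoid_proj (hfree : FreeGroupoidAction φ) : IsOrbitGroupoid φ (proj φ) := by
  refine ⟨fun γ => act_comp_proj hfree ⟨φ γ, γ, rfl⟩, fun H _ f hf => ?_⟩
  have hf' : ∀ δ : φ.range, act φ δ ⋙ f = f := by
    rintro ⟨-, γ, rfl⟩
    exact hf γ
  exact ⟨lift f hf', proj_comp_lift f hf', fun g hg => eq_lift f hf' hfree g hg⟩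

lemma proj_map_injective {x y : G} : Function.Injective ((proj φ).map : (x ⟶ y) → _) := by
  intro f f' h
  have h' := eq_of_heq (Sigma.mk.inj_iff.mp h).2
  simp only [cancel_epi, cancel_mono] at h'
  exact (act φ (toRep φ x)).map_injective h'

lemma exists_proj_map_eq {x y : G} (u : toOrbit φ x ⟶ toOrbit φ y)
    (hu : u.1 = toRep φ x * (toRep φ y)⁻¹) : ∃ f : x ⟶ y, (proj φ).map f = u := by
  have hy : (act φ u.1).obj (rep φ (toOrbit φ y)) = (act φ (toRep φ x)).obj y := by
    rw [hu, act_toRep_obj_eq]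
  refine ⟨(act φ (toRep φ x)).preimage
    (eqToHom (act_toRep_obj φ x) ≫ u.2 ≫ eqToHom hy), Hom.ext hu.symm ?_⟩
  simp

lemma injective_costarMap_proj (x : G) : Function.Injective (costarMap (proj φ) x) := by
  rintro ⟨y, f⟩ ⟨y', f'⟩ h
  have horbit : toOrbit φ y = toOrbit φ y' := congrArg Sigma.fst h
  have hrep : toRep φ y = toRep φ y' :=
    mul_right_cancel (congrArg (fun a : Costar (toOrbit φ x) => a.2.1) h)
  obtain rfl : y = y' := calc
    y = (act φ (toRep φ y)⁻¹).obj ((act φ (toRep φ y)).obj y) := (act_inv_obj_act_obj φ _ y).symm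
    _ = (act φ (toRep φ y')⁻¹).obj ((act φ (toRep φ y')).obj y') := by
      rw [act_toRep_obj, act_toRep_obj, horbit, hrep]
    _ = y' := act_inv_obj_act_obj φ _ y'
  obtain rfl : f = f' := proj_map_injective (eq_of_heq (Sigma.mk.inj_iff.mp h).2)
  rfl

lemma surjective_costarMap_proj (hfree : FreeGroupoidAction φ) (x : G) :
    Function.Surjective (costarMap (proj φ) x) := by
  rintro ⟨c, u⟩
  set y := (act φ (u.1 * toRep φ x)⁻¹).obj (rep φ c)
  have hc : toOrbit φ y = c := by rw [toOrbit_act_obj, toOrbit_rep]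
  have hy : toRep φ y = u.1 * toRep φ x := by
    rw [toRep_act_obj hfree, toRep_rep hfree, one_mul, inv_inv]
  obtain ⟨f, hf⟩ := exists_proj_map_eq (eqToHom hc ≫ u) (by simp [hy])
  exact ⟨⟨y, f⟩, Costar.ext hc hf⟩

theorem isCoveringProjection_proj (hfree : FreeGroupoidAction φ) :
    IsCoveringProjection (proj φ) := fun x =>
  ⟨injective_costarMap_proj x, surjective_costarMap_proj hfree x⟩

def label (c : Orbit φ) : (c ⟶ c) →* φ.range where
  toFun u := u.1
  map_one' := rfl
  map_mul' _ _ := rfl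

lemma range_vertexHom_proj (x : G) : (vertexHom (proj φ) x).range = (label (toOrbit φ x)).ker := by
  ext u
  constructor
  · rintro ⟨f, rfl⟩
    exact mul_inv_cancel (toRep φ x)
  · intro hu
    exact exists_proj_map_eq u (hu.trans (mul_inv_cancel (toRep φ x)).symm)

theorem isRegularCovering_proj : IsRegularCovering (proj φ) := fun x => by
  rw [range_vertexHom_proj]
  exact (label _).normal_ker

end GroupoidOrbit

open GroupoidOrbit in
theorem orbit_morphism_is_regular_covering_general {Γ : Type*} [Group Γ] {G : Type} [Groupoid.{0} G]
    (φ : Γ →* Aut (Cat.of G)) (hfree : FreeGroupoidAction φ)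
    {Q : Type} [Groupoid.{0} Q] (q : G ⥤ Q) (hq : IsOrbitGroupoid φ q) :
    IsCoveringProjection q ∧ IsRegularCovering q := by
  obtain ⟨u, v, rfl, huv, hvu⟩ := (isOrbitGroupoid_proj hfree).exists_inverse hq
  exact ⟨(isCoveringProjection_proj hfree).comp_of_inverse huv hvu,
    isRegularCovering_proj.comp_of_inverse huv hvu⟩

theorem orbit_morphism_is_regular_covering {Γ : Type*} [Group Γ] {G : Type} [Groupoid.{0} G]
    (φ : Γ →* Aut (Cat.of G)) (hfree : FreeGroupoidAction φ)
    (hconn : IsConnectedGroupoid G)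
    {Q : Type} [Groupoid.{0} Q] (q : G ⥤ Q) (hq : IsOrbitGroupoid φ q) :
    IsCoveringProjection q ∧ IsRegularCovering q :=
  orbit_morphism_is_regular_covering_general φ hfree q hq
end
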